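/- If a differentiated history h is CCv with respect to S_RW witnessed by causal order co and arbitration order arb, then the conflict relation CF is contained in arb. -/

import Mathlib

/-- A history: a set of operations `O` with a strict partial program order `po`
(union of total orders per site) and a labeling into `M × D × D`
(method, argument, return value). -/
structure History (O M D : Type) where
  po : O → O → Prop
  lab : O → M × D × D
  po_irrefl : ∀ a, ¬ po a a
  po_trans : ∀ a b c, po a b → po b c → po a c

/-- strict partial order -/
def IsSPO {O : Type} (r : O → O → Prop) : Prop :=
  (∀ a, ¬ r a a) ∧ ∀ a b c, r a b → r b c → r a c

/-- strict total order -/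
def IsSTO {O : Type} (r : O → O → Prop) : Prop :=
  IsSPO r ∧ ∀ a b, a ≠ b → r a b ∨ r b a

/-- the causal past of `o`: operations `≤_co o`. -/
def CausalPast {O : Type} (co : O → O → Prop) (o : O) : Set O :=
  {o' | co o' o ∨ o' = o}

/-- the program-order past of `o`: operations `≤_PO o`. -/
def POPast {O M D : Type} (h : History O M D) (o : O) : Set O :=
  {o' | h.po o' o ∨ o' = o}

/-- `l` is a linearization of the set `A` extending the order `r`; the full
labeling `g` agrees with `lab` on operations in `keep` and agrees on the
method and argument everywhere (i.e. may reveal return values hidden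
outside `keep`).  This encodes `CausalHist(o){keep} ⪯ ρ` for the sequence
`ρ = l.map g`. -/
def LinWitness {O M D : Type} (A : Set O) (r : O → O → Prop)
    (keep : Set O) (lab : O → M × D × D)
    (l : List O) (g : O → M × D × D) : Prop :=
  l.Nodup ∧ (∀ o, o ∈ l ↔ o ∈ A) ∧
  (∀ i j : Fin l.length, r (l.get i) (l.get j) → (i : ℕ) < (j : ℕ)) ∧
  (∀ o ∈ l, o ∈ keep → g o = lab o) ∧
  (∀ o ∈ l, (g o).1 = (lab o).1 ∧ (g o).2.1 = (lab o).2.1)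

/-- `CausalHist(o){keep}` can be sequentialized into some sequence of `S`. -/
def Linearizable {O M D : Type} (A : Set O) (r : O → O → Prop)
    (keep : Set O) (lab : O → M × D × D)
    (S : Set (List (M × D × D))) : Prop :=
  ∃ l g, LinWitness A r keep lab l g ∧ l.map g ∈ S

/-- causal consistency: some causal order `co ⊇ po` such that for every `o`,
`CausalHist(o){o} ⪯ ρ_o` for some `ρ_o ∈ S`. -/
def CC {O M D : Type} (h : History O M D) (S : Set (List (M × D × D))) : Prop :=
  ∃ co, IsSPO co ∧ (∀ a b, h.po a b → co a b) ∧
    ∀ o, Linearizable (CausalPast co o) co {o} h.lab S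

/-- causal memory: some causal order `co ⊇ po` such that for every `o`,
`CausalHist(o){POPast(o)} ⪯ ρ_o` for some `ρ_o ∈ S`. -/
def CM {O M D : Type} (h : History O M D) (S : Set (List (M × D × D))) : Prop :=
  ∃ co, IsSPO co ∧ (∀ a b, h.po a b → co a b) ∧
    ∀ o, Linearizable (CausalPast co o) co (POPast h o) h.lab S

/-- causal convergence: a causal order `co ⊇ po` and a strict total
arbitration order `arb ⊇ co` such that for every `o`,
`CausalArb(o){o} ⪯ ρ_o` for some `ρ_o ∈ S`. -/
def CCv {O M D : Type} (h : History O M D) (S : Set (List (M × D × D))) : Prop :=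
  ∃ co arb, IsSPO co ∧ (∀ a b, h.po a b → co a b) ∧
    IsSTO arb ∧ (∀ a b, co a b → arb a b) ∧
    ∀ o, Linearizable (CausalPast co o) arb {o} h.lab S
/-- read/write memory methods -/
inductive RWM : Type
  | wr
  | rd

/-- the data domain for the read/write memory over variables `X`:
`(X × ℕ) ⊎ X ⊎ ℕ ⊎ {⊥}`. -/
inductive RWD (X : Type) : Type
  | var (x : X)
  | pair (x : X) (v : ℕ)
  | val (v : ℕ)
  | bot

/-- label of a write operation `wr(x,v) ▷ ⊥` -/
def wrLab {X : Type} (x : X) (v : ℕ) : RWM × RWD X × RWD X :=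
  (RWM.wr, RWD.pair x v, RWD.bot)

/-- label of a read operation `rd(x) ▷ v` -/
def rdLab {X : Type} (x : X) (v : ℕ) : RWM × RWD X × RWD X :=
  (RWM.rd, RWD.var x, RWD.val v)

/-- the label is a write on variable `x` -/
def isWrLabOn {X : Type} (x : X) (l : RWM × RWD X × RWD X) : Prop :=
  ∃ v, l = wrLab x v

/-- the read/write memory specification `S_RW`, defined inductively. -/
inductive SRW {X : Type} : List (RWM × RWD X × RWD X) → Prop
  | nil : SRW []
  | wr (ρ) (x : X) (v : ℕ) : SRW ρ → SRW (ρ ++ [wrLab x v])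
  | rd0 (ρ) (x : X) : SRW ρ → (∀ l ∈ ρ, ¬ isWrLabOn x l) →
      SRW (ρ ++ [rdLab x 0])
  | rd (ρ₁ ρ₂) (x : X) (v : ℕ) :
      SRW (ρ₁ ++ [wrLab x v] ++ ρ₂) → (∀ l ∈ ρ₂, ¬ isWrLabOn x l) →
      SRW (ρ₁ ++ [wrLab x v] ++ ρ₂ ++ [rdLab x v])

/-- a history is differentiated if each value is written at most once per
variable and the initial value `0` is never written. -/
def Differentiated {O X : Type} (h : History O RWM (RWD X)) : Prop :=
  (∀ o₁ o₂ (x : X) (v : ℕ), h.lab o₁ = wrLab x v → h.lab o₂ = wrLab x v → o₁ = o₂) ∧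
  (∀ o (x : X), h.lab o ≠ wrLab x 0)

/-- the read-from relation -/
def RF {O X : Type} (h : History O RWM (RWD X)) (o₁ o₂ : O) : Prop :=
  ∃ (x : X) (d : ℕ), h.lab o₁ = wrLab x d ∧ h.lab o₂ = rdLab x d

/-- the relation `CO = (PO ∪ RF)⁺` -/
def CO {O X : Type} (h : History O RWM (RWD X)) : O → O → Prop :=
  Relation.TransGen (fun a b => h.po a b ∨ RF h a b)

/-- the conflict relation `CF`: `w₁ <_CF w₂` iff `w₁, w₂` write distinct
values `d₁ ≠ d₂` on the same variable `x` and `w₁ <_CO r₂` for some read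
`r₂ = rd(x) ▷ d₂`. -/
def CF {O X : Type} (h : History O RWM (RWD X)) (w₁ w₂ : O) : Prop :=
  ∃ (x : X) (d₁ d₂ : ℕ) (r₂ : O), d₁ ≠ d₂ ∧
    h.lab w₁ = wrLab x d₁ ∧ h.lab w₂ = wrLab x d₂ ∧
    h.lab r₂ = rdLab x d₂ ∧ CO h w₁ r₂


section Aux

open scoped Classical

variable {X : Type}

/-- value update: only a genuine write label `wrLab x v` updates the value. -/
noncomputable def updVal (x : X) (a : ℕ) (e : RWM × RWD X × RWD X) : ℕ :=
  match e with
  | (RWM.wr, RWD.pair y v, RWD.bot) => if y = x then v else a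
  | _ => a

/-- the value of the last write on `x`, starting from `a`. -/
noncomputable def lwA (x : X) : ℕ → List (RWM × RWD X × RWD X) → ℕ
  | a, [] => a
  | a, e :: ρ => lwA x (updVal x a e) ρ

lemma updVal_wrLab (x : X) (a : ℕ) (v : ℕ) : updVal x a (wrLab x v) = v := by
  simp [updVal, wrLab]

lemma updVal_cases (x : X) (a : ℕ) (e : RWM × RWD X × RWD X) :
    updVal x a e = a ∨ ∃ v, e = wrLab x v ∧ updVal x a e = v := by
  obtain ⟨m, d, r⟩ := e
  cases m <;> cases d <;> cases r <;> try (left; rfl)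
  rename_i y v
  by_cases hy : y = x
  · subst hy; right; exact ⟨v, rfl, by simp [updVal]⟩
  · left; simp [updVal, hy]

lemma updVal_of_not {x : X} {e : RWM × RWD X × RWD X} (hne : ¬ isWrLabOn x e)
    (a : ℕ) : updVal x a e = a := by
  rcases updVal_cases x a e with h | ⟨v, he, _⟩
  · exact h
  · exact absurd ⟨v, he⟩ hne

lemma lwA_append (x : X) (a : ℕ) (σ τ : List (RWM × RWD X × RWD X)) :
    lwA x a (σ ++ τ) = lwA x (lwA x a σ) τ := by
  induction σ generalizing a with
  | nil => rfl
  | cons e σ ih => simp only [List.cons_append, lwA]; exact ih _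

lemma lwA_cons (x : X) (a : ℕ) (e : RWM × RWD X × RWD X)
    (ρ : List (RWM × RWD X × RWD X)) :
    lwA x a (e :: ρ) = lwA x (updVal x a e) ρ := rfl

lemma lwA_take_drop (x : X) (a : ℕ) (n : ℕ) (L : List (RWM × RWD X × RWD X)) :
    lwA x a L = lwA x (lwA x a (L.take n)) (L.drop n) := by
  rw [← lwA_append, List.take_append_drop]

lemma lwA_no_write {x : X} {ρ : List (RWM × RWD X × RWD X)}
    (hnw : ∀ e ∈ ρ, ¬ isWrLabOn x e) (a : ℕ) : lwA x a ρ = a := by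
  induction ρ generalizing a with
  | nil => rfl
  | cons e ρ ih =>
      simp only [lwA]
      rw [updVal_of_not (hnw e (by simp)) a]
      exact ih (fun e' he' => hnw e' (by simp [he'])) a

lemma lwA_mem (x : X) (ρ : List (RWM × RWD X × RWD X)) (a : ℕ) :
    lwA x a ρ = a ∨ ∃ v, wrLab x v ∈ ρ ∧ lwA x a ρ = v := by
  induction ρ generalizing a with
  | nil => left; rfl
  | cons e ρ ih =>
      simp only [lwA]
      rcases ih (updVal x a e) with h | ⟨v, hv, hlw⟩
      · rcases updVal_cases x a e with h' | ⟨v, he, h'⟩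
        · left; rw [h, h']
        · right; exact ⟨v, by simp [he], by rw [h, h']⟩
      · right; exact ⟨v, by simp [hv], hlw⟩

lemma wrLab_ne_rdLab (x y : X) (v w : ℕ) : wrLab x v ≠ rdLab y w := by
  simp [wrLab, rdLab]

lemma wrLab_inj {x y : X} {v w : ℕ} (h : wrLab x v = wrLab y w) : x = y ∧ v = w := by
  simpa [wrLab] using h

lemma rdLab_inj {x y : X} {v w : ℕ} (h : rdLab x v = rdLab y w) : x = y ∧ v = w := by
  simpa [rdLab] using h

/-- every element of a sequence in `S_RW` is a genuine write or read label. -/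
lemma srw_elem {ρ : List (RWM × RWD X × RWD X)} (h : SRW ρ) :
    ∀ e ∈ ρ, (∃ x v, e = wrLab x v) ∨ (∃ x v, e = rdLab x v) := by
  induction h with
  | nil => intro e he; simp at he
  | wr ρ y v _ ih =>
      intro e he
      rcases List.mem_append.mp he with he | he
      · exact ih e he
      · left; exact ⟨y, v, by simpa using he⟩
  | rd0 ρ y _ _ ih =>
      intro e he
      rcases List.mem_append.mp he with he | he
      · exact ih e he
      · right; exact ⟨y, 0, by simpa using he⟩
  | rd ρ₁ ρ₂ y v _ _ ih =>
      intro e he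
      rw [show ρ₁ ++ [wrLab y v] ++ ρ₂ ++ [rdLab y v]
            = (ρ₁ ++ [wrLab y v] ++ ρ₂) ++ [rdLab y v] by simp] at he
      rcases List.mem_append.mp he with he | he
      · exact ih e he
      · right; exact ⟨y, v, by simpa using he⟩

lemma srw_last_step {P : List (RWM × RWD X × RWD X)} {e : RWM × RWD X × RWD X}
    (hread : ∀ (x : X) (d k : ℕ) (hk : k < P.length),
        P[k] = rdLab x d → lwA x 0 (P.take k) = d)
    (hlast : ∀ (x : X) (d : ℕ), e = rdLab x d → lwA x 0 P = d) :
    ∀ (x : X) (d k : ℕ) (hk : k < (P ++ [e]).length),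
        (P ++ [e])[k] = rdLab x d → lwA x 0 ((P ++ [e]).take k) = d := by
  intro x d k hk hget
  have hk' : k < P.length + 1 := by simpa using hk
  rcases Nat.lt_or_ge k P.length with hlt | hge
  · rw [List.getElem_append_left hlt] at hget
    rw [List.take_append_of_le_length (Nat.le_of_lt hlt)]
    exact hread x d k hlt hget
  · have hkeq : k = P.length := by omega
    subst hkeq
    have he : (P ++ [e])[P.length]'(by simp) = e := by simp
    have : e = rdLab x d := by rw [← he]; exact hget
    rw [List.take_append_of_le_length (le_refl _), List.take_length]
    exact hlast x d this

/-- in a sequence of `S_RW`, a read returns the value of the last write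
on the same variable (or `0`). -/
lemma srw_read {ρ : List (RWM × RWD X × RWD X)} (h : SRW ρ) :
    ∀ (x : X) (d k : ℕ) (hk : k < ρ.length),
      ρ[k] = rdLab x d → lwA x 0 (ρ.take k) = d := by
  induction h with
  | nil => intro x d k hk; simp at hk
  | wr ρ y v _ ih =>
      exact srw_last_step ih (fun x d hd => absurd hd (wrLab_ne_rdLab y x v d))
  | rd0 ρ y _ hnw ih =>
      refine srw_last_step ih ?_
      intro x d hd
      obtain ⟨hxy, hd0⟩ := rdLab_inj hd
      subst hxy; rw [← hd0]
      exact lwA_no_write hnw 0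
  | rd ρ₁ ρ₂ y v _ hnw ih =>
      rw [show ρ₁ ++ [wrLab y v] ++ ρ₂ ++ [rdLab y v]
            = (ρ₁ ++ [wrLab y v] ++ ρ₂) ++ [rdLab y v] by simp]
      refine srw_last_step ih ?_
      intro x d hd
      obtain ⟨hxy, hdv⟩ := rdLab_inj hd
      rw [← hxy, ← hdv]
      rw [List.append_assoc, lwA_append]
      have : lwA y (lwA y 0 ρ₁) ([wrLab y v] ++ ρ₂) = v := by
        rw [lwA_append]
        show lwA y (lwA y (updVal y (lwA y 0 ρ₁) (wrLab y v)) []) ρ₂ = v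
        rw [updVal_wrLab]
        exact lwA_no_write hnw v
      rw [this]

end Aux

/-- If a differentiated history is CCv w.r.t. `S_RW` witnessed by a causal
order `co` and an arbitration order `arb`, then `CF ⊆ arb`. -/
theorem cf_subset_arb {O X : Type} (h : History O RWM (RWD X))
    (hdiff : Differentiated h)
    (co arb : O → O → Prop)
    (hspo : IsSPO co) (hpo : ∀ a b, h.po a b → co a b)
    (hsto : IsSTO arb) (hcoarb : ∀ a b, co a b → arb a b)
    (hwit : ∀ o, Linearizable (CausalPast co o) arb {o} h.lab {ρ | SRW ρ}) :
    ∀ a b, CF h a b → arb a b := by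
  classical
  -- every operation's own label is a genuine write or read label
  have labshape : ∀ o, (∃ x v, h.lab o = wrLab x v) ∨ (∃ x v, h.lab o = rdLab x v) := by
    intro o
    obtain ⟨l, g, ⟨hnd, hmem, hord, hkeep, hma⟩, hS⟩ := hwit o
    have hS : SRW (l.map g) := hS
    have ho : o ∈ l := (hmem o).mpr (Or.inr rfl)
    have hgo : g o = h.lab o := hkeep o ho rfl
    have : g o ∈ l.map g := List.mem_map_of_mem (f := g) ho
    have := srw_elem hS _ this
    rwa [hgo] at this
  -- if the linearization labels an operation as a write, its actual label is that write
  have pullback : ∀ (l : List O) (g : O → RWM × RWD X × RWD X),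
      (∀ o ∈ l, (g o).1 = (h.lab o).1 ∧ (g o).2.1 = (h.lab o).2.1) →
      ∀ o ∈ l, ∀ x v, g o = wrLab x v → h.lab o = wrLab x v := by
    intro l g hma o ho x v hg
    rcases labshape o with ⟨y, w, hy⟩ | ⟨y, w, hy⟩
    · have h2 := (hma o ho).2
      rw [hg, hy] at h2
      simp only [wrLab] at h2
      obtain ⟨hxy, hvw⟩ : x = y ∧ v = w := by
        simpa using h2
      rw [hy, hxy, hvw]
    · have h1 := (hma o ho).1
      rw [hg, hy] at h1
      simp [wrLab, rdLab] at h1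
  -- pull a write label occurring in the linearization back to an operation
  have findwr : ∀ (l : List O) (g : O → RWM × RWD X × RWD X),
      (∀ o ∈ l, (g o).1 = (h.lab o).1 ∧ (g o).2.1 = (h.lab o).2.1) →
      ∀ (x : X) (v : ℕ), wrLab x v ∈ l.map g →
      ∃ o ∈ l, h.lab o = wrLab x v := by
    intro l g hma x v hmem
    obtain ⟨o, ho, hgo⟩ := List.mem_map.mp hmem
    exact ⟨o, ho, pullback l g hma o ho x v hgo⟩
  -- RF ⊆ co
  have rfco : ∀ a b, RF h a b → co a b := by
    rintro a b ⟨x, d, ha, hb⟩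
    have hd0 : d ≠ 0 := fun hd => hdiff.2 a x (hd ▸ ha)
    obtain ⟨l, g, ⟨hnd, hmem, hord, hkeep, hma⟩, hS⟩ := hwit b
    have hS : SRW (l.map g) := hS
    have hb' : b ∈ l := (hmem b).mpr (Or.inr rfl)
    obtain ⟨k, hkl, hkget⟩ := List.mem_iff_getElem.mp hb'
    have hgb : g b = rdLab x d := by rw [hkeep b hb' rfl, hb]
    have hkl' : k < (l.map g).length := by simpa using hkl
    have hget : (l.map g)[k] = rdLab x d := by
      rw [List.getElem_map, hkget, hgb]
    have hread := srw_read hS x d k hkl' hget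
    rcases lwA_mem x ((l.map g).take k) 0 with h0 | ⟨v, hv, hlw⟩
    · rw [hread] at h0; exact absurd h0 hd0
    · have hvd : v = d := by rw [← hlw, hread]
      rw [hvd] at hv
      have hwl : wrLab x d ∈ l.map g := List.mem_of_mem_take hv
      obtain ⟨o, ho, hlab⟩ := findwr l g hma x d hwl
      have hoa : o = a := hdiff.1 o a x d hlab ha
      subst hoa
      rcases (hmem o).mp ho with hco | heq
      · exact hco
      · subst heq
        rw [ha] at hb
        exact absurd hb (wrLab_ne_rdLab x x d d)
  -- CO ⊆ co
  have coco : ∀ a b, CO h a b → co a b := by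
    intro a b hab
    induction hab with
    | single hr => rcases hr with hp | hr
                   · exact hpo _ _ hp
                   · exact rfco _ _ hr
    | tail _ hr ih =>
        rcases hr with hp | hr
        · exact hspo.2 _ _ _ ih (hpo _ _ hp)
        · exact hspo.2 _ _ _ ih (rfco _ _ hr)
  rintro w₁ w₂ ⟨x, d₁, d₂, r₂, hne, hw₁, hw₂, hr₂, hCO⟩
  have hco1 : co w₁ r₂ := coco _ _ hCO
  have hco2 : co w₂ r₂ := rfco _ _ ⟨x, d₂, hw₂, hr₂⟩
  have hw12 : w₁ ≠ w₂ := by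
    intro e
    rw [e, hw₂] at hw₁
    exact hne ((wrLab_inj hw₁.symm).2)
  rcases hsto.2 w₁ w₂ hw12 with harb | harb
  · exact harb
  · -- derive a contradiction from arb w₂ w₁
    exfalso
    obtain ⟨l, g, ⟨hnd, hmem, hord, hkeep, hma⟩, hS⟩ := hwit r₂
    have hS : SRW (l.map g) := hS
    have hr2l : r₂ ∈ l := (hmem r₂).mpr (Or.inr rfl)
    have hw1l : w₁ ∈ l := (hmem w₁).mpr (Or.inl hco1)
    have hw2l : w₂ ∈ l := (hmem w₂).mpr (Or.inl hco2)
    obtain ⟨i, hi⟩ := List.mem_iff_get.mp hw2l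
    obtain ⟨j, hj⟩ := List.mem_iff_get.mp hw1l
    obtain ⟨k, hk⟩ := List.mem_iff_get.mp hr2l
    have hij : (i : ℕ) < (j : ℕ) := hord i j (by rw [hi, hj]; exact harb)
    have hjk : (j : ℕ) < (k : ℕ) := hord j k (by rw [hj, hk]; exact hcoarb _ _ hco1)
    rw [List.get_eq_getElem] at hi hj hk
    -- the linearization labels
    have hgr : g r₂ = rdLab x d₂ := by rw [hkeep r₂ hr2l rfl, hr₂]
    have hgw1 : g w₁ = wrLab x d₁ := by
      have hmem' : g w₁ ∈ l.map g := List.mem_map_of_mem (f := g) hw1l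
      rcases srw_elem hS _ hmem' with ⟨y, w, hy⟩ | ⟨y, w, hy⟩
      · have h2 := (hma w₁ hw1l).2
        rw [hy, hw₁] at h2
        simp only [wrLab] at h2
        obtain ⟨hxy, hvw⟩ : y = x ∧ w = d₁ := by simpa using h2
        rw [hy, hxy, hvw]
      · have h1 := (hma w₁ hw1l).1
        rw [hy, hw₁] at h1
        simp [wrLab, rdLab] at h1
    -- positions in ρ = l.map g
    have hkρ : (k : ℕ) < (l.map g).length := by rw [List.length_map]; exact k.isLt
    have hjρ : (j : ℕ) < (l.map g).length := by rw [List.length_map]; exact j.isLt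
    have hgetk : (l.map g)[(k : ℕ)]'hkρ = rdLab x d₂ := by
      rw [List.getElem_map, hk, hgr]
    have hgetj : (l.map g)[(j : ℕ)]'hjρ = wrLab x d₁ := by
      rw [List.getElem_map, hj, hgw1]
    have hread := srw_read hS x d₂ k hkρ hgetk
    -- the prefix before the read, split at position j
    have hσlen : ((l.map g).take (k : ℕ)).length = (k : ℕ) := by
      rw [List.length_take]; exact Nat.min_eq_left (Nat.le_of_lt hkρ)
    have hjσ : (j : ℕ) < ((l.map g).take (k : ℕ)).length := by rw [hσlen]; exact hjk
    have hσj : ((l.map g).take (k : ℕ))[(j : ℕ)]'hjσ = wrLab x d₁ := by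
      rw [List.getElem_take]; exact hgetj
    have hdropj : ((l.map g).take (k : ℕ)).drop (j : ℕ)
        = wrLab x d₁ :: ((l.map g).take (k : ℕ)).drop ((j : ℕ) + 1) := by
      rw [List.drop_eq_getElem_cons hjσ, hσj]
    have hlw : lwA x d₁ (((l.map g).take (k : ℕ)).drop ((j : ℕ) + 1)) = d₂ := by
      have h1 := hread
      rw [lwA_take_drop x 0 (j : ℕ), hdropj, lwA_cons, updVal_wrLab] at h1
      exact h1
    rcases lwA_mem x (((l.map g).take (k : ℕ)).drop ((j : ℕ) + 1)) d₁ with h0 | ⟨v, hv, hlw'⟩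
    · rw [hlw] at h0; exact hne h0.symm
    · have hvd : v = d₂ := by rw [← hlw', hlw]
      rw [hvd] at hv
      -- find the operation at that position
      obtain ⟨n, hn, hnget⟩ := List.mem_iff_getElem.mp hv
      rw [List.getElem_drop] at hnget
      have hmk : (j : ℕ) + 1 + n < (k : ℕ) := by
        rw [List.length_drop, hσlen] at hn; omega
      have hmρ : (j : ℕ) + 1 + n < (l.map g).length := lt_trans hmk hkρ
      have hρm : (l.map g)[(j : ℕ) + 1 + n]'hmρ = wrLab x d₂ := by
        rw [← hnget, List.getElem_take]
      have hml : (j : ℕ) + 1 + n < l.length := by rwa [List.length_map] at hmρ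
      have hgm : g (l[(j : ℕ) + 1 + n]'hml) = wrLab x d₂ := by
        rw [← List.getElem_map (f := g)]; exact hρm
      have hlabm : h.lab (l[(j : ℕ) + 1 + n]'hml) = wrLab x d₂ :=
        pullback l g hma _ (List.getElem_mem _) x d₂ hgm
      have heq2 : l[(j : ℕ) + 1 + n]'hml = w₂ := hdiff.1 _ w₂ x d₂ hlabm hw₂
      have heqi : l[(j : ℕ) + 1 + n]'hml = l[(i : ℕ)]'i.isLt := by rw [heq2, hi]
      have := (hnd.getElem_inj_iff).mp heqi
      omega
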